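/- arXiv:2102.07158 — 5 statements merged into one kernel-verified Lean document; each statement's English description precedes it below -/
import Mathlib

section
/- Suppose ∇²f(x*) ⪰ μ* I for some μ* ≥ 0 and that μ* + λ > 0. For any x ∈ ℝ^d define the NEWTON-STAR step x⁺ = x − (∇²f(x*) + λ I)^{-1} ∇P(x). Then ‖x⁺ − x*‖ ≤ (ν / (2(μ* + λ))) · ((1/(nm)) Σ_{i=1}^n Σ_{j=1}^m ‖a_{ij}‖³) · ‖x − x*‖². -/
open MeasureTheory Filter
open scoped BigOperators

noncomputable section

abbrev Euc (d : ℕ) := EuclideanSpace ℝ (Fin d)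

/-- Real inner product on Euclidean space. -/
def rinner {d : ℕ} (a x : Euc d) : ℝ := inner ℝ a x

/-- The rank-one matrix `a aᵀ`. -/
def outerMat {d : ℕ} (a : Euc d) : Matrix (Fin d) (Fin d) ℝ := fun p q => a p * a q

/-- `(1/(nm)) ∑_{ij} c_{ij} a_{ij} a_{ij}ᵀ`. -/
def Hmat {n m d : ℕ} (a : Fin n → Fin m → Euc d) (c : Fin n → Fin m → ℝ) :
    Matrix (Fin d) (Fin d) ℝ :=
  ((n : ℝ) * m)⁻¹ • ∑ i, ∑ j, c i j • outerMat (a i j)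

/-- Matrix-vector multiplication as a map on Euclidean space. -/
def mulVecE {d : ℕ} (M : Matrix (Fin d) (Fin d) ℝ) (v : Euc d) : Euc d := WithLp.toLp 2 (M.mulVec v)

/-- The vector `h_i(y) = (φ''_{i1}(⟨a_{i1},y⟩), …, φ''_{im}(⟨a_{im},y⟩)) ∈ ℝ^m`. -/
def hvecOf {n m d : ℕ} (a : Fin n → Fin m → Euc d) (φ'' : Fin n → Fin m → ℝ → ℝ)
    (i : Fin n) (y : Euc d) : Euc m :=
  WithLp.toLp 2 (fun j => φ'' i j (rinner (a i j) y))

/-- Componentwise positive part on ℝ^m. -/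
def posPartE {m : ℕ} (v : Euc m) : Euc m := WithLp.toLp 2 (fun j => max (v j) 0)

/-!
With `M = ∇²f(x*) + λ I` and `∇P(x*) = 0`, the step error is
`x⁺ - x* = M⁻¹ (M (x - x*) - (∇P(x) - ∇P(x*)))`. The `λ`-terms cancel, leaving
`(1/(nm)) ∑ r_ij a_ij`, where
`r_ij = φ''_ij(⟨a_ij, x*⟩) ⟨a_ij, x - x*⟩ - (φ'_ij(⟨a_ij, x⟩) - φ'_ij(⟨a_ij, x*⟩))`
is the first-order Taylor remainder of `φ'_ij`. Lipschitz continuity of `φ''_ij` bounds it by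
`(ν/2) ⟨a_ij, x - x*⟩² ≤ (ν/2) ‖a_ij‖² ‖x - x*‖²`, and `M - (μ* + λ) I ⪰ 0` gives
`‖M⁻¹ v‖ ≤ ‖v‖ / (μ* + λ)`.
-/

open Interval InnerProductSpace

theorem abs_sub_sub_deriv_mul_le {g : ℝ → ℝ} (hg : ContDiff ℝ 1 g) {ν : ℝ}
    (hlip : ∀ s t, |deriv g s - deriv g t| ≤ ν * |s - t|) (a b : ℝ) :
    |g b - g a - deriv g a * (b - a)| ≤ ν / 2 * (b - a) ^ 2 := by
  have hcont : Continuous (deriv g) := hg.continuous_deriv le_rfl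
  have hftc : g b - g a - deriv g a * (b - a) = ∫ t in a..b, (deriv g t - deriv g a) := by
    rw [intervalIntegral.integral_sub (hcont.intervalIntegrable _ _) intervalIntegrable_const,
      intervalIntegral.integral_deriv_eq_sub' g rfl (fun t _ => hg.differentiable one_ne_zero t)
        hcont.continuousOn, intervalIntegral.integral_const, smul_eq_mul, mul_comm]
  rw [hftc, ← Real.norm_eq_abs, intervalIntegral.norm_intervalIntegral_eq]
  calc ‖∫ t in Ι a b, (deriv g t - deriv g a)‖ ≤ ∫ t in Ι a b, ν * |t - a| ^ 1 :=
        norm_integral_le_of_norm_le (Continuous.integrableOn_uIoc (by fun_prop))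
          (ae_of_all _ fun t => by simpa using hlip t a)
    _ = ν / 2 * (b - a) ^ 2 := by
        rw [integral_const_mul, integral_pow_abs_sub_uIoc, sq_abs]; ring

section InnerProductSpace

variable {E : Type*} [NormedAddCommGroup E] [InnerProductSpace ℝ E]

theorem abs_deriv_deriv_mul_inner_sub_le {φ : ℝ → ℝ} (hφ : ContDiff ℝ 2 φ) {ν : ℝ} (hν : 0 ≤ ν)
    (hlip : ∀ s t, |deriv (deriv φ) s - deriv (deriv φ) t| ≤ ν * |s - t|) (a x y : E) :
    |deriv (deriv φ) (inner ℝ a y) * inner ℝ a (x - y)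
        - (deriv φ (inner ℝ a x) - deriv φ (inner ℝ a y))| ≤ ν / 2 * ‖a‖ ^ 2 * ‖x - y‖ ^ 2 := by
  have hg : ContDiff ℝ 1 (deriv φ) := hφ.iterate_deriv' 1 1
  rw [inner_sub_right, abs_sub_comm]
  calc _ ≤ ν / 2 * (inner ℝ a x - inner ℝ a y) ^ 2 := abs_sub_sub_deriv_mul_le hg hlip _ _
    _ ≤ ν / 2 * (‖a‖ * ‖x - y‖) ^ 2 := by
        rw [← inner_sub_right]
        exact mul_le_mul_of_nonneg_left (sq_le_sq' (abs_le.1 (abs_real_inner_le_norm a (x - y))).1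
          (real_inner_le_norm a (x - y))) (by positivity)
    _ = ν / 2 * ‖a‖ ^ 2 * ‖x - y‖ ^ 2 := by ring

theorem norm_smul_sum_sum_taylor_residual_le {ι κ : Type*} [Fintype ι] [Fintype κ] {c ν : ℝ}
    (hc : 0 ≤ c) (hν : 0 ≤ ν) (a : ι → κ → E) {φ : ι → κ → ℝ → ℝ}
    (hφ : ∀ i j, ContDiff ℝ 2 (φ i j))
    (hlip : ∀ i j s t, |deriv (deriv (φ i j)) s - deriv (deriv (φ i j)) t| ≤ ν * |s - t|)
    (x y : E) :
    ‖c • ∑ i, ∑ j, (deriv (deriv (φ i j)) (inner ℝ (a i j) y) * inner ℝ (a i j) (x - y)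
        - (deriv (φ i j) (inner ℝ (a i j) x) - deriv (φ i j) (inner ℝ (a i j) y))) • a i j‖
      ≤ ν / 2 * (c * ∑ i, ∑ j, ‖a i j‖ ^ 3) * ‖x - y‖ ^ 2 := by
  rw [norm_smul, Real.norm_of_nonneg hc]
  calc c * ‖∑ i, ∑ j, _‖ ≤ c * ∑ i, ∑ j, ν / 2 * ‖a i j‖ ^ 2 * ‖x - y‖ ^ 2 * ‖a i j‖ := by
        gcongr
        refine (norm_sum_le _ _).trans (Finset.sum_le_sum fun i _ => ?_)
        refine (norm_sum_le _ _).trans (Finset.sum_le_sum fun j _ => ?_)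
        rw [norm_smul, Real.norm_eq_abs]
        gcongr
        exact abs_deriv_deriv_mul_inner_sub_le (hφ i j) hν (hlip i j) _ _ _
    _ = ν / 2 * (c * ∑ i, ∑ j, ‖a i j‖ ^ 3) * ‖x - y‖ ^ 2 := by
        simp only [Finset.mul_sum, Finset.sum_mul]
        exact Finset.sum_congr rfl fun i _ => Finset.sum_congr rfl fun j _ => by ring

variable [CompleteSpace E] {f g : E → ℝ} {f' g' x : E}

theorem HasGradientAt.add (hf : HasGradientAt f f' x) (hg : HasGradientAt g g' x) :
    HasGradientAt (fun y => f y + g y) (f' + g') x := by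
  rw [hasGradientAt_iff_hasFDerivAt, map_add]
  exact hf.hasFDerivAt.add hg.hasFDerivAt

theorem HasGradientAt.const_mul (c : ℝ) (hf : HasGradientAt f f' x) :
    HasGradientAt (fun y => c * f y) (c • f') x := by
  rw [hasGradientAt_iff_hasFDerivAt, map_smulₛₗ]
  exact hf.hasFDerivAt.const_mul c

theorem HasGradientAt.sum {ι : Type*} (s : Finset ι) {F : ι → E → ℝ} {F' : ι → E}
    (h : ∀ i ∈ s, HasGradientAt (F i) (F' i) x) :
    HasGradientAt (fun y => ∑ i ∈ s, F i y) (∑ i ∈ s, F' i) x := by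
  rw [hasGradientAt_iff_hasFDerivAt, map_sum]
  exact HasFDerivAt.fun_sum fun i hi => (h i hi).hasFDerivAt

theorem IsLocalMin.hasGradientAt_eq_zero (hmin : IsLocalMin f x) (hf : HasGradientAt f f' x) :
    f' = 0 :=
  (toDual ℝ E).map_eq_zero_iff.1 (hmin.hasFDerivAt_eq_zero hf.hasFDerivAt)

theorem hasGradientAt_comp_inner {φ : ℝ → ℝ} (a : E) (hφ : DifferentiableAt ℝ φ (inner ℝ a x)) :
    HasGradientAt (fun y => φ (inner ℝ a y)) (deriv φ (inner ℝ a x) • a) x := by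
  rw [hasGradientAt_iff_hasFDerivAt, map_smul]
  exact hφ.hasDerivAt.comp_hasFDerivAt x (innerSL ℝ a).hasFDerivAt

theorem hasGradientAt_norm_sq (x : E) : HasGradientAt (fun y => ‖y‖ ^ 2) ((2 : ℝ) • x) x := by
  rw [hasGradientAt_iff_hasFDerivAt]
  refine (hasStrictFDerivAt_norm_sq x).hasFDerivAt.congr_fderiv ?_
  ext v
  simp

theorem hasGradientAt_sum_comp_inner_add_norm_sq {ι κ : Type*} [Fintype ι] [Fintype κ]
    (c lam : ℝ) (a : ι → κ → E) {φ : ι → κ → ℝ → ℝ} (hφ : ∀ i j, Differentiable ℝ (φ i j))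
    (x : E) :
    HasGradientAt (fun y => c * ∑ i, ∑ j, φ i j (inner ℝ (a i j) y) + lam / 2 * ‖y‖ ^ 2)
      (c • ∑ i, ∑ j, deriv (φ i j) (inner ℝ (a i j) x) • a i j + lam • x) x := by
  have h := ((HasGradientAt.sum Finset.univ fun i _ => HasGradientAt.sum Finset.univ fun j _ =>
    hasGradientAt_comp_inner (a i j) ((hφ i j) _)).const_mul c).add
      ((hasGradientAt_norm_sq x).const_mul (lam / 2))
  rwa [smul_smul, div_mul_cancel₀ lam two_ne_zero] at h

end InnerProductSpace

section Matrix

open Matrix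

variable {d : ℕ}

theorem add_mulVecE (M N : Matrix (Fin d) (Fin d) ℝ) (v : Euc d) :
    mulVecE (M + N) v = mulVecE M v + mulVecE N v := by
  simp [mulVecE, add_mulVec]

theorem smul_mulVecE (c : ℝ) (M : Matrix (Fin d) (Fin d) ℝ) (v : Euc d) :
    mulVecE (c • M) v = c • mulVecE M v := by
  simp [mulVecE, smul_mulVec]

theorem sum_mulVecE {ι : Type*} (s : Finset ι) (M : ι → Matrix (Fin d) (Fin d) ℝ) (v : Euc d) :
    mulVecE (∑ i ∈ s, M i) v = ∑ i ∈ s, mulVecE (M i) v := by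
  simp [mulVecE, sum_mulVec]

theorem one_mulVecE (v : Euc d) : mulVecE 1 v = v := by
  simp [mulVecE]

theorem mulVecE_sub (M : Matrix (Fin d) (Fin d) ℝ) (v w : Euc d) :
    mulVecE M (v - w) = mulVecE M v - mulVecE M w := by
  simp [mulVecE, mulVec_sub]

theorem mulVecE_mulVecE (M N : Matrix (Fin d) (Fin d) ℝ) (v : Euc d) :
    mulVecE M (mulVecE N v) = mulVecE (M * N) v := by
  simp [mulVecE, mulVec_mulVec]

theorem mulVecE_outerMat (a v : Euc d) : mulVecE (outerMat a) v = rinner a v • a := by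
  ext p
  simp [mulVecE, outerMat, rinner, mulVec, dotProduct, PiLp.inner_apply, Finset.mul_sum,
    mul_assoc, mul_comm]

theorem mulVecE_Hmat {n m : ℕ} (a : Fin n → Fin m → Euc d) (c : Fin n → Fin m → ℝ) (v : Euc d) :
    mulVecE (Hmat a c) v = ((n : ℝ) * m)⁻¹ • ∑ i, ∑ j, (c i j * rinner (a i j) v) • a i j := by
  simp only [Hmat, smul_mulVecE, sum_mulVecE, mulVecE_outerMat, smul_smul]

variable {M : Matrix (Fin d) (Fin d) ℝ} {c : ℝ}

theorem mul_norm_sq_le_rinner_mulVecE (hM : (M - c • 1).PosSemidef) (v : Euc d) :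
    c * ‖v‖ ^ 2 ≤ rinner v (mulVecE M v) := by
  have h : 0 ≤ rinner v (mulVecE (M - c • 1) v) := by
    simpa [rinner, EuclideanSpace.inner_eq_star_dotProduct, mulVecE, dotProduct_comm]
      using hM.dotProduct_mulVec_nonneg (WithLp.ofLp v)
  rwa [sub_eq_add_neg, add_mulVecE, ← neg_smul, smul_mulVecE, one_mulVecE, rinner,
    inner_add_right, inner_smul_right, real_inner_self_eq_norm_sq, neg_mul, ← sub_eq_add_neg,
    sub_nonneg] at h

theorem mul_norm_le_norm_mulVecE (hM : (M - c • 1).PosSemidef) (v : Euc d) :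
    c * ‖v‖ ≤ ‖mulVecE M v‖ := by
  rcases (norm_nonneg v).eq_or_lt with hv | hv
  · rw [← hv, mul_zero]
    exact norm_nonneg _
  refine le_of_mul_le_mul_right ?_ hv
  calc c * ‖v‖ * ‖v‖ = c * ‖v‖ ^ 2 := by ring
    _ ≤ rinner v (mulVecE M v) := mul_norm_sq_le_rinner_mulVecE hM v
    _ ≤ ‖mulVecE M v‖ * ‖v‖ := (real_inner_le_norm _ _).trans_eq (mul_comm _ _)

theorem isUnit_of_posSemidef_sub_smul_one (hM : (M - c • 1).PosSemidef) (hc : 0 < c) :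
    IsUnit M :=
  sub_add_cancel M (c • 1) ▸ (PosDef.posSemidef_add hM (PosDef.one.smul hc)).isUnit

theorem norm_mulVecE_inv_le (hM : (M - c • 1).PosSemidef) (hc : 0 < c) (g : Euc d) :
    ‖mulVecE M⁻¹ g‖ ≤ c⁻¹ * ‖g‖ := by
  have hdet := (isUnit_iff_isUnit_det M).1 (isUnit_of_posSemidef_sub_smul_one hM hc)
  have h := mul_norm_le_norm_mulVecE hM (mulVecE M⁻¹ g)
  rwa [mulVecE_mulVecE, mul_nonsing_inv M hdet, one_mulVecE, ← le_inv_mul_iff₀ hc] at h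

theorem sub_mulVecE_inv_sub (hM : IsUnit M) (x y g : Euc d) :
    x - mulVecE M⁻¹ g - y = mulVecE M⁻¹ (mulVecE M (x - y) - g) := by
  rw [mulVecE_sub, mulVecE_mulVecE, nonsing_inv_mul M ((isUnit_iff_isUnit_det M).1 hM),
    one_mulVecE]
  abel

end Matrix

theorem mulVecE_Hmat_add_smul_one_sub {n m d : ℕ} (a : Fin n → Fin m → Euc d)
    (c p q : Fin n → Fin m → ℝ) (lam : ℝ) (x y : Euc d) :
    mulVecE (Hmat a c + lam • 1) (x - y)
        - ((((n : ℝ) * m)⁻¹ • ∑ i, ∑ j, p i j • a i j + lam • x)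
          - (((n : ℝ) * m)⁻¹ • ∑ i, ∑ j, q i j • a i j + lam • y))
      = ((n : ℝ) * m)⁻¹ •
          ∑ i, ∑ j, (c i j * inner ℝ (a i j) (x - y) - (p i j - q i j)) • a i j := by
  simp only [add_mulVecE, mulVecE_Hmat, rinner, smul_mulVecE, one_mulVecE, sub_smul,
    Finset.sum_sub_distrib, smul_sub]
  abel

theorem newton_star_local_quadratic_general
    {n m d : ℕ}
    (ν lam μstar : ℝ) (hν : 0 ≤ ν)
    (a : Fin n → Fin m → Euc d) (φ : Fin n → Fin m → ℝ → ℝ)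
    (φ'' : Fin n → Fin m → ℝ → ℝ) (hφ'' : ∀ i j, φ'' i j = deriv (deriv (φ i j)))
    (hsmooth : ∀ i j, ContDiff ℝ 2 (φ i j))
    (hlip : ∀ i j s t, |φ'' i j s - φ'' i j t| ≤ ν * |s - t|)
    (P : Euc d → ℝ)
    (hP : ∀ y, P y = ((n : ℝ) * m)⁻¹ * (∑ i, ∑ j, φ i j (rinner (a i j) y))
        + lam / 2 * ‖y‖ ^ 2)
    (xstar : Euc d) (hmin : ∀ y, P xstar ≤ P y)
    (hpsd : (Hmat a (fun i j => φ'' i j (rinner (a i j) xstar)) -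
        μstar • (1 : Matrix (Fin d) (Fin d) ℝ)).PosSemidef)
    (hpos : 0 < μstar + lam)
    (x xplus : Euc d)
    (hstep : xplus = x - mulVecE
        (Hmat a (fun i j => φ'' i j (rinner (a i j) xstar)) +
          lam • (1 : Matrix (Fin d) (Fin d) ℝ))⁻¹ (gradient P x)) :
    ‖xplus - xstar‖ ≤ ν / (2 * (μstar + lam)) *
      (((n : ℝ) * m)⁻¹ * ∑ i, ∑ j, ‖a i j‖ ^ 3) * ‖x - xstar‖ ^ 2 := by
  obtain rfl : φ'' = fun i j => deriv (deriv (φ i j)) := funext fun i => funext (hφ'' i)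
  obtain rfl : P = _ := funext hP
  unfold rinner at hpsd hstep
  set H := Hmat a (fun i j => deriv (deriv (φ i j)) (inner ℝ (a i j) xstar))
  have hM : (H + lam • 1 - (μstar + lam) • (1 : Matrix (Fin d) (Fin d) ℝ)).PosSemidef := by
    rwa [add_smul, add_sub_add_right_eq_sub]
  have hgrad := hasGradientAt_sum_comp_inner_add_norm_sq (((n : ℝ) * m)⁻¹) lam a
    fun i j => (hsmooth i j).differentiable two_ne_zero
  have hcrit := IsLocalMin.hasGradientAt_eq_zero (Filter.Eventually.of_forall hmin) (hgrad xstar)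
  have hres : xplus - xstar = mulVecE (H + lam • 1)⁻¹ (((n : ℝ) * m)⁻¹ • ∑ i, ∑ j,
      (deriv (deriv (φ i j)) (inner ℝ (a i j) xstar) * inner ℝ (a i j) (x - xstar)
        - (deriv (φ i j) (inner ℝ (a i j) x) - deriv (φ i j) (inner ℝ (a i j) xstar)))
          • a i j) := by
    rw [hstep, sub_mulVecE_inv_sub (isUnit_of_posSemidef_sub_smul_one hM hpos),
      (hgrad x).gradient, ← sub_zero (_ + lam • x), ← hcrit, mulVecE_Hmat_add_smul_one_sub]
  calc ‖xplus - xstar‖ ≤ (μstar + lam)⁻¹ * ‖((n : ℝ) * m)⁻¹ • ∑ i, ∑ j, _‖ :=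
        hres ▸ norm_mulVecE_inv_le hM hpos _
    _ ≤ (μstar + lam)⁻¹ *
          (ν / 2 * (((n : ℝ) * m)⁻¹ * ∑ i, ∑ j, ‖a i j‖ ^ 3) * ‖x - xstar‖ ^ 2) := by
        gcongr
        exact norm_smul_sum_sum_taylor_residual_le (by positivity) hν a hsmooth hlip x xstar
    _ = _ := by field_simp

/-- local quadratic convergence of NEWTON-STAR. -/
theorem newton_star_local_quadratic
    {n m d : ℕ} (hn : 0 < n) (hm : 0 < m) (hd : 0 < d)
    (ν γ lam μstar : ℝ) (hν : 0 ≤ ν) (hγ : 0 < γ) (hlam : 0 ≤ lam)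
    (a : Fin n → Fin m → Euc d) (φ : Fin n → Fin m → ℝ → ℝ)
    (φ'' : Fin n → Fin m → ℝ → ℝ) (hφ'' : ∀ i j, φ'' i j = deriv (deriv (φ i j)))
    (hsmooth : ∀ i j, ContDiff ℝ 2 (φ i j))
    (hbdd : ∀ i j t, |φ'' i j t| ≤ γ)
    (hlip : ∀ i j s t, |φ'' i j s - φ'' i j t| ≤ ν * |s - t|)
    (P : Euc d → ℝ)
    (hP : ∀ y, P y = ((n : ℝ) * m)⁻¹ * (∑ i, ∑ j, φ i j (rinner (a i j) y))
        + lam / 2 * ‖y‖ ^ 2)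
    (xstar : Euc d) (hmin : ∀ y, P xstar ≤ P y)
    (hpsd : (Hmat a (fun i j => φ'' i j (rinner (a i j) xstar)) -
        μstar • (1 : Matrix (Fin d) (Fin d) ℝ)).PosSemidef)
    (hμ : 0 ≤ μstar) (hpos : 0 < μstar + lam)
    (x xplus : Euc d)
    (hstep : xplus = x - mulVecE
        (Hmat a (fun i j => φ'' i j (rinner (a i j) xstar)) +
          lam • (1 : Matrix (Fin d) (Fin d) ℝ))⁻¹ (gradient P x)) :
    ‖xplus - xstar‖ ≤ ν / (2 * (μstar + lam)) *
      (((n : ℝ) * m)⁻¹ * ∑ i, ∑ j, ‖a i j‖ ^ 3) * ‖x - xstar‖ ^ 2 :=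
  newton_star_local_quadratic_general ν lam μstar hν a φ φ'' hφ'' hsmooth hlip P hP xstar hmin hpsd
    hpos x xplus hstep
end
end

section
/- Assume each φ_{ij} is convex (so every entry of h_i(x*) is nonnegative). Let ω ≥ 0 and 0 < η ≤ 1/(ω+1). Fix x ∈ ℝ^d and vectors h_1, …, h_n ∈ ℝ^m, and let g_1, …, g_n : Ω → ℝ^m be random vectors on a probability space (Ω, F, ℙ) satisfying E[g_i] = h_i(x) − h_i and E‖g_i‖² ≤ (ω+1)‖h_i(x) − h_i‖² for each i. Then E[ Σ_{i=1}^n ‖[h_i + η g_i]_+ − h_i(x*)‖² ] ≤ (1−η) Σ_{i=1}^n ‖h_i − h_i(x*)‖² + η ν² S² ‖x − x*‖², where S² = Σ_{i=1}^n Σ_{j=1}^m ‖a_{ij}‖² and [·]_+ denotes the componentwise positive part. -/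
open MeasureTheory Filter
open scoped BigOperators

noncomputable section

/-!
Convexity of `φ_{ij}` puts `h_i(x*)` in the nonnegative orthant, and the componentwise positive part
is the projection onto that orthant, so it can only decrease the distance to `h_i(x*)`. It therefore
suffices to bound `E‖u + η g‖²` for `u = h_i - h_i(x*)`. With `w = h_i(x) - h_i = E g` and
`E‖g‖² ≤ (ω + 1)‖w‖²`, the condition `η (ω + 1) ≤ 1` gives
`E‖u + η g‖² ≤ ‖u‖² + 2η⟪u, w⟫ + η‖w‖² = (1 - η)‖u‖² + η‖u + w‖²`,
and `u + w = h_i(x) - h_i(x*)` is controlled by the Lipschitz constant `ν` of `φ''`.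
-/

open scoped RealInnerProductSpace

section ExpectedSquaredNorm

variable {E : Type*} [NormedAddCommGroup E] [InnerProductSpace ℝ E]
  {Ω : Type*} [MeasurableSpace Ω] {μ : Measure Ω} {g : Ω → E}

lemma norm_add_smul_sq (u v : E) (η : ℝ) :
    ‖u + η • v‖ ^ 2 = ‖u‖ ^ 2 + 2 * η * ⟪u, v⟫ + η ^ 2 * ‖v‖ ^ 2 := by
  rw [norm_add_sq_real, real_inner_smul_right, norm_smul, mul_pow, Real.norm_eq_abs, sq_abs]
  ring

variable [IsProbabilityMeasure μ]

lemma integrable_norm_add_smul_sq (u : E) (η : ℝ) (hg : Integrable g μ)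
    (hg2 : Integrable (fun t => ‖g t‖ ^ 2) μ) :
    Integrable (fun t => ‖u + η • g t‖ ^ 2) μ := by
  simp_rw [norm_add_smul_sq]
  exact ((integrable_const _).add ((hg.const_inner u).const_mul _)).add (hg2.const_mul _)

variable [CompleteSpace E]

lemma integral_norm_add_smul_sq (u : E) (η : ℝ) (hg : Integrable g μ)
    (hg2 : Integrable (fun t => ‖g t‖ ^ 2) μ) :
    ∫ t, ‖u + η • g t‖ ^ 2 ∂μ
      = ‖u‖ ^ 2 + 2 * η * ⟪u, ∫ t, g t ∂μ⟫ + η ^ 2 * ∫ t, ‖g t‖ ^ 2 ∂μ := by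
  have hinner : Integrable (fun t => 2 * η * ⟪u, g t⟫) μ := (hg.const_inner u).const_mul _
  have hlin : Integrable (fun t => ‖u‖ ^ 2 + 2 * η * ⟪u, g t⟫) μ := (integrable_const _).add hinner
  simp_rw [norm_add_smul_sq]
  rw [integral_add hlin (hg2.const_mul _),
    integral_add (integrable_const _) hinner, integral_const, integral_const_mul,
    integral_const_mul, integral_inner hg]
  simp

lemma integral_norm_add_smul_sq_le (u w : E) {ω η : ℝ} (hη0 : 0 ≤ η) (hη : η * (ω + 1) ≤ 1)
    (hg : Integrable g μ) (hg2 : Integrable (fun t => ‖g t‖ ^ 2) μ)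
    (hmean : ∫ t, g t ∂μ = w) (hvar : ∫ t, ‖g t‖ ^ 2 ∂μ ≤ (ω + 1) * ‖w‖ ^ 2) :
    ∫ t, ‖u + η • g t‖ ^ 2 ∂μ ≤ (1 - η) * ‖u‖ ^ 2 + η * ‖u + w‖ ^ 2 := by
  have hsecond : η ^ 2 * ∫ t, ‖g t‖ ^ 2 ∂μ ≤ η * ‖w‖ ^ 2 :=
    calc η ^ 2 * ∫ t, ‖g t‖ ^ 2 ∂μ ≤ η ^ 2 * ((ω + 1) * ‖w‖ ^ 2) := by gcongr
      _ = η * (η * (ω + 1)) * ‖w‖ ^ 2 := by ring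
      _ ≤ η * 1 * ‖w‖ ^ 2 := by gcongr
      _ = η * ‖w‖ ^ 2 := by ring
  rw [integral_norm_add_smul_sq u η hg hg2, hmean, norm_add_sq_real u w]
  linarith

end ExpectedSquaredNorm

lemma ConvexOn.deriv_deriv_nonneg {f : ℝ → ℝ} (hf : ConvexOn ℝ Set.univ f)
    (hd : Differentiable ℝ f) (t : ℝ) : 0 ≤ deriv (deriv f) t :=
  (monotoneOn_univ.mp (hf.monotoneOn_deriv fun x _ => hd x)).deriv_nonneg

lemma hvecOf_nonneg {n m d : ℕ} (a : Fin n → Fin m → Euc d) {φ φ'' : Fin n → Fin m → ℝ → ℝ}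
    (hφ'' : ∀ i j, φ'' i j = deriv (deriv (φ i j))) (hsmooth : ∀ i j, ContDiff ℝ 2 (φ i j))
    (hconv : ∀ i j, ConvexOn ℝ Set.univ (φ i j)) (i : Fin n) (y : Euc d) (j : Fin m) :
    0 ≤ hvecOf a φ'' i y j := by
  simp only [hvecOf, hφ'']
  exact (hconv i j).deriv_deriv_nonneg ((hsmooth i j).differentiable two_ne_zero) _

lemma norm_posPartE_sub_sq_le {m : ℕ} (v w : Euc m) (hw : ∀ j, 0 ≤ w j) :
    ‖posPartE v - w‖ ^ 2 ≤ ‖v - w‖ ^ 2 := by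
  have hpos : ∀ j, posPartE v j = max (v j) 0 := fun _ => rfl
  simp only [EuclideanSpace.real_norm_sq_eq, PiLp.sub_apply, hpos]
  refine Finset.sum_le_sum fun j _ => sq_le_sq.mpr ?_
  simpa only [max_eq_left (hw j)] using abs_max_sub_max_le_abs (v j) (w j) 0

lemma norm_hvecOf_sub_sq_le {n m d : ℕ} (a : Fin n → Fin m → Euc d)
    (φ'' : Fin n → Fin m → ℝ → ℝ) {ν : ℝ} (i : Fin n)
    (hlip : ∀ j s t, |φ'' i j s - φ'' i j t| ≤ ν * |s - t|) (x y : Euc d) :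
    ‖hvecOf a φ'' i x - hvecOf a φ'' i y‖ ^ 2 ≤ ν ^ 2 * (∑ j, ‖a i j‖ ^ 2) * ‖x - y‖ ^ 2 := by
  rw [EuclideanSpace.real_norm_sq_eq, Finset.mul_sum, Finset.sum_mul]
  refine Finset.sum_le_sum fun j _ => ?_
  have hinner : |rinner (a i j) x - rinner (a i j) y| ≤ ‖a i j‖ * ‖x - y‖ := by
    rw [rinner, rinner, ← inner_sub_right]
    exact abs_real_inner_le_norm _ _
  calc (φ'' i j (rinner (a i j) x) - φ'' i j (rinner (a i j) y)) ^ 2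
      ≤ (ν * |rinner (a i j) x - rinner (a i j) y|) ^ 2 :=
        sq_le_sq' (neg_le_of_abs_le (hlip j _ _)) (le_of_abs_le (hlip j _ _))
    _ = ν ^ 2 * |rinner (a i j) x - rinner (a i j) y| ^ 2 := by ring
    _ ≤ ν ^ 2 * (‖a i j‖ * ‖x - y‖) ^ 2 := by gcongr
    _ = ν ^ 2 * ‖a i j‖ ^ 2 * ‖x - y‖ ^ 2 := by ring

theorem nl1_learning_step_general
    {n m d : ℕ}
    (ν : ℝ)
    (a : Fin n → Fin m → Euc d) (φ : Fin n → Fin m → ℝ → ℝ)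
    (φ'' : Fin n → Fin m → ℝ → ℝ) (hφ'' : ∀ i j, φ'' i j = deriv (deriv (φ i j)))
    (hsmooth : ∀ i j, ContDiff ℝ 2 (φ i j))
    (hlip : ∀ i j s t, |φ'' i j s - φ'' i j t| ≤ ν * |s - t|)
    (hconv : ∀ i j, ConvexOn ℝ Set.univ (φ i j))
    (xstar : Euc d)
    (ωc η : ℝ) (hη0 : 0 < η) (hη : η ≤ 1 / (ωc + 1))
    (x : Euc d) (h : Fin n → Euc m)
    (Ω : Type*) [MeasurableSpace Ω] (ℙ : Measure Ω) [IsProbabilityMeasure ℙ]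
    (g : Fin n → Ω → Euc m)
    (hgint : ∀ i, Integrable (g i) ℙ)
    (hgsqint : ∀ i, Integrable (fun t => ‖g i t‖ ^ 2) ℙ)
    (hgmean : ∀ i, (∫ t, g i t ∂ℙ) = hvecOf a φ'' i x - h i)
    (hgvar : ∀ i, (∫ t, ‖g i t‖ ^ 2 ∂ℙ) ≤ (ωc + 1) * ‖hvecOf a φ'' i x - h i‖ ^ 2) :
    (∫ t, (∑ i, ‖posPartE (h i + η • g i t) - hvecOf a φ'' i xstar‖ ^ 2) ∂ℙ) ≤
      (1 - η) * ∑ i, ‖h i - hvecOf a φ'' i xstar‖ ^ 2 +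
        η * ν ^ 2 * (∑ i, ∑ j, ‖a i j‖ ^ 2) * ‖x - xstar‖ ^ 2 := by
  have hη1 : η * (ωc + 1) ≤ 1 := by
    have hω : 0 < ωc + 1 := one_div_pos.mp (hη0.trans_le hη)
    rwa [le_div_iff₀ hω] at hη
  set u : Fin n → Euc m := fun i => h i - hvecOf a φ'' i xstar
  have hint : ∀ i, Integrable (fun t => ‖u i + η • g i t‖ ^ 2) ℙ := fun i =>
    integrable_norm_add_smul_sq _ _ (hgint i) (hgsqint i)
  calc ∫ t, (∑ i, ‖posPartE (h i + η • g i t) - hvecOf a φ'' i xstar‖ ^ 2) ∂ℙ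
      ≤ ∫ t, (∑ i, ‖u i + η • g i t‖ ^ 2) ∂ℙ := by
        refine integral_mono_of_nonneg (ae_of_all _ fun t => by positivity)
          (integrable_finsetSum _ fun i _ => hint i) (ae_of_all _ fun t => ?_)
        refine Finset.sum_le_sum fun i _ => ?_
        simpa only [u, sub_add_eq_add_sub] using norm_posPartE_sub_sq_le _ _
          (hvecOf_nonneg a hφ'' hsmooth hconv i xstar)
    _ = ∑ i, ∫ t, ‖u i + η • g i t‖ ^ 2 ∂ℙ := integral_finsetSum _ fun i _ => hint i
    _ ≤ ∑ i, ((1 - η) * ‖u i‖ ^ 2 + η * (ν ^ 2 * (∑ j, ‖a i j‖ ^ 2) * ‖x - xstar‖ ^ 2)) := by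
        refine Finset.sum_le_sum fun i _ => ?_
        have hstep := integral_norm_add_smul_sq_le (u i) _ hη0.le hη1 (hgint i) (hgsqint i)
          (hgmean i) (hgvar i)
        have hsum : u i + (hvecOf a φ'' i x - h i) = hvecOf a φ'' i x - hvecOf a φ'' i xstar := by
          simp only [u]; abel
        rw [hsum] at hstep
        exact hstep.trans (add_le_add_right (mul_le_mul_of_nonneg_left
          (norm_hvecOf_sub_sq_le a φ'' i (hlip i) x xstar) hη0.le) _)
    _ = (1 - η) * ∑ i, ‖h i - hvecOf a φ'' i xstar‖ ^ 2 +
          η * ν ^ 2 * (∑ i, ∑ j, ‖a i j‖ ^ 2) * ‖x - xstar‖ ^ 2 := by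
        simp only [Finset.sum_add_distrib, ← Finset.mul_sum, ← Finset.sum_mul, u]
        ring

/-- one step of the NL1 learning procedure (Lemma on ℋ^k, with positive part). -/
theorem nl1_learning_step
    {n m d : ℕ} (hn : 0 < n) (hm : 0 < m) (hd : 0 < d)
    (ν γ lam : ℝ) (hν : 0 ≤ ν) (hγ : 0 < γ) (hlam : 0 ≤ lam)
    (a : Fin n → Fin m → Euc d) (φ : Fin n → Fin m → ℝ → ℝ)
    (φ'' : Fin n → Fin m → ℝ → ℝ) (hφ'' : ∀ i j, φ'' i j = deriv (deriv (φ i j)))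
    (hsmooth : ∀ i j, ContDiff ℝ 2 (φ i j))
    (hbdd : ∀ i j t, |φ'' i j t| ≤ γ)
    (hlip : ∀ i j s t, |φ'' i j s - φ'' i j t| ≤ ν * |s - t|)
    (hconv : ∀ i j, ConvexOn ℝ Set.univ (φ i j))
    (P : Euc d → ℝ)
    (hP : ∀ y, P y = ((n : ℝ) * m)⁻¹ * (∑ i, ∑ j, φ i j (rinner (a i j) y))
        + lam / 2 * ‖y‖ ^ 2)
    (xstar : Euc d) (hmin : ∀ y, P xstar ≤ P y)
    (ωc η : ℝ) (hωc : 0 ≤ ωc) (hη0 : 0 < η) (hη : η ≤ 1 / (ωc + 1))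
    (x : Euc d) (h : Fin n → Euc m)
    (Ω : Type*) [MeasurableSpace Ω] (ℙ : Measure Ω) [IsProbabilityMeasure ℙ]
    (g : Fin n → Ω → Euc m)
    (hgint : ∀ i, Integrable (g i) ℙ)
    (hgsqint : ∀ i, Integrable (fun t => ‖g i t‖ ^ 2) ℙ)
    (hgmean : ∀ i, (∫ t, g i t ∂ℙ) = hvecOf a φ'' i x - h i)
    (hgvar : ∀ i, (∫ t, ‖g i t‖ ^ 2 ∂ℙ) ≤ (ωc + 1) * ‖hvecOf a φ'' i x - h i‖ ^ 2) :
    (∫ t, (∑ i, ‖posPartE (h i + η • g i t) - hvecOf a φ'' i xstar‖ ^ 2) ∂ℙ) ≤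
      (1 - η) * ∑ i, ‖h i - hvecOf a φ'' i xstar‖ ^ 2 +
        η * ν ^ 2 * (∑ i, ∑ j, ‖a i j‖ ^ 2) * ‖x - xstar‖ ^ 2 :=
  nl1_learning_step_general ν a φ φ'' hφ'' hsmooth hlip hconv xstar ωc η hη0 hη x h Ω ℙ g hgint
    hgsqint hgmean hgvar
end
end

section
/- Fix x ∈ ℝ^d and reals h_{ij} with |h_{ij}| ≤ γ for all i ∈ [n], j ∈ [m], and set β = max_{i,j} (h_{ij}(x) + 2γ)/(h_{ij} + 2γ). Then for every i, j: | β − ∫_0^1 (h_{ij}(x* + τ(x − x*)) + 2γ)/(h_{ij} + 2γ) dτ | ≤ (2νR/γ) ‖x − x*‖ + (2/γ) max_{i',j'} |h_{i'j'} − h_{i'j'}(x*)|. -/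
open MeasureTheory Filter
open scoped BigOperators

noncomputable section

/-!
Since `|c| ≤ γ`, the denominator `c + 2γ` is at least `γ`, so `(t + 2γ) / (c + 2γ)` is within
`|t - c| / γ` of `1`. Both `β` and the integrand are such ratios with `t` a value of `φ''`
at a point of the segment `[x*, x]`; there the Lipschitz bound on `φ''` puts `t` within
`ν R ‖x - x*‖` of its value at `x*`, which is within `Dm` of `c`. Hence `β` and the integral
are both within `(ν R ‖x - x*‖ + Dm) / γ` of `1`.
-/

lemma abs_div_add_two_mul_sub_one_le {γ c : ℝ} (hγ : 0 < γ) (hc : |c| ≤ γ) (t : ℝ) :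
    |(t + 2 * γ) / (c + 2 * γ) - 1| ≤ |t - c| / γ := by
  have hden : γ ≤ c + 2 * γ := by linarith [neg_abs_le c]
  have hpos : 0 < c + 2 * γ := hγ.trans_le hden
  rw [div_sub_one hpos.ne', abs_div, abs_of_pos hpos,
    show t + 2 * γ - (c + 2 * γ) = t - c by ring]
  exact div_le_div_of_nonneg_left (abs_nonneg _) hγ hden

lemma abs_intervalIntegral_div_add_two_mul_sub_one_le {γ c M : ℝ} {F : ℝ → ℝ}
    (hγ : 0 < γ) (hc : |c| ≤ γ) (hF : IntervalIntegrable F volume 0 1)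
    (hFc : ∀ τ ∈ Set.Icc (0 : ℝ) 1, |F τ - c| ≤ M) :
    |(∫ τ in (0 : ℝ)..1, (F τ + 2 * γ) / (c + 2 * γ)) - 1| ≤ M / γ := by
  have hratio : IntervalIntegrable (fun τ => (F τ + 2 * γ) / (c + 2 * γ)) volume 0 1 :=
    (hF.add intervalIntegrable_const).div_const _
  have hsub : (∫ τ in (0 : ℝ)..1, (F τ + 2 * γ) / (c + 2 * γ)) - 1
      = ∫ τ in (0 : ℝ)..1, ((F τ + 2 * γ) / (c + 2 * γ) - 1) := by
    rw [intervalIntegral.integral_sub hratio intervalIntegrable_const]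
    simp
  rw [hsub]
  have hbound : ∀ τ ∈ Set.uIoc (0 : ℝ) 1, ‖(F τ + 2 * γ) / (c + 2 * γ) - 1‖ ≤ M / γ := fun τ hτ => by
    rw [Set.uIoc_of_le zero_le_one] at hτ
    refine (abs_div_add_two_mul_sub_one_le hγ hc (F τ)).trans ?_
    gcongr
    exact hFc τ (Set.Ioc_subset_Icc_self hτ)
  simpa using intervalIntegral.norm_integral_le_of_norm_le_const hbound

lemma abs_sub_comp_inner_le {E : Type*} [NormedAddCommGroup E] [InnerProductSpace ℝ E]
    {g : ℝ → ℝ} {ν R : ℝ} (hν : 0 ≤ ν) (hg : ∀ s t, |g s - g t| ≤ ν * |s - t|)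
    {a : E} (ha : ‖a‖ ≤ R) (y z : E) :
    |g (inner ℝ a y) - g (inner ℝ a z)| ≤ ν * R * ‖y - z‖ := by
  calc |g (inner ℝ a y) - g (inner ℝ a z)| ≤ ν * |inner ℝ a (y - z)| := by
        rw [inner_sub_right]; exact hg _ _
    _ ≤ ν * (‖a‖ * ‖y - z‖) := by gcongr; exact abs_real_inner_le_norm _ _
    _ ≤ ν * R * ‖y - z‖ := by rw [← mul_assoc]; gcongr

lemma norm_add_smul_sub_self_le {E : Type*} [NormedAddCommGroup E] [NormedSpace ℝ E] (x y : E)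
    {τ : ℝ} (hτ : τ ∈ Set.Icc (0 : ℝ) 1) : ‖y + τ • (x - y) - y‖ ≤ ‖x - y‖ := by
  rw [add_sub_cancel_left, norm_smul, Real.norm_of_nonneg hτ.1]
  exact mul_le_of_le_one_left (norm_nonneg _) hτ.2

theorem beta_integral_deviation_bound_general
    {n m d : ℕ}
    (ν γ R : ℝ) (hν : 0 ≤ ν) (hγ : 0 < γ)
    (a : Fin n → Fin m → Euc d)
    (φ'' : Fin n → Fin m → ℝ → ℝ)
    (hlip : ∀ i j s t, |φ'' i j s - φ'' i j t| ≤ ν * |s - t|)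
    (hRub : ∀ i j, ‖a i j‖ ≤ R)
    (xstar : Euc d)
    (x : Euc d) (c : Fin n → Fin m → ℝ) (hcγ : ∀ i j, |c i j| ≤ γ)
    (β : ℝ)
    (hβmem : ∃ i j, β = (φ'' i j (rinner (a i j) x) + 2 * γ) / (c i j + 2 * γ))
    (Dm : ℝ)
    (hDub : ∀ i j, |c i j - φ'' i j (rinner (a i j) xstar)| ≤ Dm) :
    ∀ i j,
      |β - ∫ τ in (0:ℝ)..1,
          (φ'' i j (rinner (a i j) (xstar + τ • (x - xstar))) + 2 * γ) / (c i j + 2 * γ)| ≤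
        2 * ν * R / γ * ‖x - xstar‖ + 2 / γ * Dm := by
  intro i j
  obtain ⟨i₀, j₀, rfl⟩ := hβmem
  have hnear : ∀ i j y, ‖y - xstar‖ ≤ ‖x - xstar‖ →
      |φ'' i j (rinner (a i j) y) - c i j| ≤ ν * R * ‖x - xstar‖ + Dm := fun i j y hy => by
    have hlip_y := abs_sub_comp_inner_le hν (hlip i j) (hRub i j) y xstar
    have hR : 0 ≤ R := (norm_nonneg _).trans (hRub i j)
    calc |φ'' i j (rinner (a i j) y) - c i j|
        ≤ |φ'' i j (rinner (a i j) y) - φ'' i j (rinner (a i j) xstar)|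
          + |c i j - φ'' i j (rinner (a i j) xstar)| := by
          rw [abs_sub_comm (c i j)]; exact abs_sub_le _ _ _
      _ ≤ ν * R * ‖x - xstar‖ + Dm := by
          gcongr
          · exact hlip_y.trans (by gcongr)
          · exact hDub i j
  have hβ := (abs_div_add_two_mul_sub_one_le hγ (hcγ i₀ j₀) _).trans
    (div_le_div_of_nonneg_right (hnear i₀ j₀ x le_rfl) hγ.le)
  have hcont : Continuous (φ'' i j) :=
    (LipschitzWith.of_dist_le_mul (K := ⟨ν, hν⟩) fun s t => hlip i j s t).continuous
  have hI := abs_intervalIntegral_div_add_two_mul_sub_one_le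
    (F := fun τ => φ'' i j (rinner (a i j) (xstar + τ • (x - xstar)))) hγ (hcγ i j)
    ((hcont.comp (by unfold rinner; fun_prop)).intervalIntegrable 0 1)
    fun τ hτ => hnear i j _ (norm_add_smul_sub_self_le x xstar hτ)
  rw [show 2 * ν * R / γ * ‖x - xstar‖ + 2 / γ * Dm
    = 2 * ((ν * R * ‖x - xstar‖ + Dm) / γ) by ring]
  rw [abs_le] at hβ hI ⊢
  constructor <;> linarith [hβ.1, hβ.2, hI.1, hI.2]

/-- bound on the deviation of β from the averaged Hessian coefficient ratio. -/
theorem beta_integral_deviation_bound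
    {n m d : ℕ} (hn : 0 < n) (hm : 0 < m) (hd : 0 < d)
    (ν γ lam R : ℝ) (hν : 0 ≤ ν) (hγ : 0 < γ) (hlam : 0 ≤ lam)
    (a : Fin n → Fin m → Euc d) (φ : Fin n → Fin m → ℝ → ℝ)
    (φ'' : Fin n → Fin m → ℝ → ℝ) (hφ'' : ∀ i j, φ'' i j = deriv (deriv (φ i j)))
    (hsmooth : ∀ i j, ContDiff ℝ 2 (φ i j))
    (hbdd : ∀ i j t, |φ'' i j t| ≤ γ)
    (hlip : ∀ i j s t, |φ'' i j s - φ'' i j t| ≤ ν * |s - t|)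
    (hRub : ∀ i j, ‖a i j‖ ≤ R) (hRmem : ∃ i j, R = ‖a i j‖)
    (P : Euc d → ℝ)
    (hP : ∀ y, P y = ((n : ℝ) * m)⁻¹ * (∑ i, ∑ j, φ i j (rinner (a i j) y))
        + lam / 2 * ‖y‖ ^ 2)
    (xstar : Euc d) (hmin : ∀ y, P xstar ≤ P y)
    (x : Euc d) (c : Fin n → Fin m → ℝ) (hcγ : ∀ i j, |c i j| ≤ γ)
    (β : ℝ)
    (hβub : ∀ i j, (φ'' i j (rinner (a i j) x) + 2 * γ) / (c i j + 2 * γ) ≤ β)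
    (hβmem : ∃ i j, β = (φ'' i j (rinner (a i j) x) + 2 * γ) / (c i j + 2 * γ))
    (Dm : ℝ)
    (hDub : ∀ i j, |c i j - φ'' i j (rinner (a i j) xstar)| ≤ Dm)
    (hDmem : ∃ i j, Dm = |c i j - φ'' i j (rinner (a i j) xstar)|) :
    ∀ i j,
      |β - ∫ τ in (0:ℝ)..1,
          (φ'' i j (rinner (a i j) (xstar + τ • (x - xstar))) + 2 * γ) / (c i j + 2 * γ)| ≤
        2 * ν * R / γ * ‖x - xstar‖ + 2 / γ * Dm :=
  beta_integral_deviation_bound_general ν γ R hν hγ a φ'' hlip hRub xstar x c hcγ β hβmem Dm hDub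
end
end

section
/- Fix x ∈ ℝ^d, suppose ‖a_{ij}‖ ≤ R for all i, j, and let h_{ij} be reals with |h_{ij}| ≤ γ. With β = max_{i,j} (h_{ij}(x) + 2γ)/(h_{ij} + 2γ) and H = (1/(nm)) Σ_{i,j} [ β (h_{ij} + 2γ) − 2γ ] a_{ij} a_{ij}ᵀ, the estimator error is bounded by ‖H − ∇²f(x)‖ ≤ 18 γ R² in operator norm. -/
open MeasureTheory Filter
open scoped BigOperators

noncomputable section

/-
With `|h|, |c| ≤ γ` every ratio `(h + 2γ)/(c + 2γ)` is a quotient of two numbers in `[γ, 3γ]`,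
so `β ∈ [0, 3]`. Hence each coefficient `β (c_{ij} + 2γ) − 2γ − h_{ij}(x)` of `H − ∇²f(x)` lies in
`[−3γ, 8γ]`, and an average of rank-one matrices `a aᵀ` with `‖a‖ ≤ R` and coefficients bounded
by `C` has operator norm at most `C R²`.
-/

open InnerProductSpace in
lemma toEuclideanCLM_outerMat {d : ℕ} (a : Euc d) :
    Matrix.toEuclideanCLM (𝕜 := ℝ) (outerMat a) = rankOne ℝ a a := by
  ext v p
  simp [outerMat, Matrix.mulVec, dotProduct, rankOne_apply, PiLp.inner_apply, Finset.mul_sum,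
    mul_comm, mul_assoc]

lemma norm_toEuclideanCLM_outerMat {d : ℕ} (a : Euc d) :
    ‖Matrix.toEuclideanCLM (𝕜 := ℝ) (outerMat a)‖ = ‖a‖ ^ 2 := by
  rw [toEuclideanCLM_outerMat, InnerProductSpace.norm_rankOne, sq]

lemma Hmat_sub {n m d : ℕ} (a : Fin n → Fin m → Euc d) (c₁ c₂ : Fin n → Fin m → ℝ) :
    Hmat a c₁ - Hmat a c₂ = Hmat a (fun i j => c₁ i j - c₂ i j) := by
  simp only [Hmat, ← smul_sub, ← Finset.sum_sub_distrib, ← sub_smul]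

lemma norm_toEuclideanCLM_Hmat_le {n m d : ℕ} {a : Fin n → Fin m → Euc d}
    {e : Fin n → Fin m → ℝ} {C R : ℝ} (hC : 0 ≤ C) (he : ∀ i j, |e i j| ≤ C)
    (ha : ∀ i j, ‖a i j‖ ≤ R) :
    ‖Matrix.toEuclideanCLM (𝕜 := ℝ) (Hmat a e)‖ ≤ C * R ^ 2 := by
  set T := fun i j => Matrix.toEuclideanCLM (𝕜 := ℝ) (outerMat (a i j))
  have hterm : ∀ i j, ‖e i j • T i j‖ ≤ C * R ^ 2 := fun i j => by
    rw [norm_smul, Real.norm_eq_abs, norm_toEuclideanCLM_outerMat]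
    gcongr
    exacts [he i j, ha i j]
  have hsum : ‖∑ i, ∑ j, e i j • T i j‖ ≤ (n : ℝ) * m * (C * R ^ 2) := calc
    _ ≤ ∑ i : Fin n, ∑ j : Fin m, ‖e i j • T i j‖ :=
      (norm_sum_le _ _).trans (Finset.sum_le_sum fun i _ => norm_sum_le _ _)
    _ ≤ ∑ _i : Fin n, ∑ _j : Fin m, C * R ^ 2 :=
      Finset.sum_le_sum fun i _ => Finset.sum_le_sum fun j _ => hterm i j
    _ = (n : ℝ) * m * (C * R ^ 2) := by simp [mul_assoc]
  calc ‖Matrix.toEuclideanCLM (𝕜 := ℝ) (Hmat a e)‖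
      = ((n : ℝ) * m)⁻¹ * ‖∑ i, ∑ j, e i j • T i j‖ := by
        simp only [Hmat, map_smul, map_sum, norm_smul, norm_inv, Real.norm_eq_abs,
          abs_of_nonneg (by positivity : (0 : ℝ) ≤ n * m), T]
    _ ≤ ((n : ℝ) * m)⁻¹ * ((n : ℝ) * m * (C * R ^ 2)) := by gcongr
    _ ≤ C * R ^ 2 := by
      rw [← mul_assoc]
      exact mul_le_of_le_one_left (by positivity) inv_mul_le_one

lemma shifted_ratio_mem_Icc {γ h c : ℝ} (hh : |h| ≤ γ) (hc : |c| ≤ γ) :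
    (h + 2 * γ) / (c + 2 * γ) ∈ Set.Icc 0 3 := by
  rw [abs_le] at hh hc
  exact ⟨div_nonneg (by linarith) (by linarith),
    div_le_of_le_mul₀ (by linarith) (by norm_num) (by linarith)⟩

lemma abs_estimator_coeff_le {γ β h c : ℝ} (hβ : β ∈ Set.Icc 0 3) (hh : |h| ≤ γ)
    (hc : |c| ≤ γ) : |β * (c + 2 * γ) - 2 * γ - h| ≤ 8 * γ := by
  rw [abs_le] at hh hc ⊢
  have hlow : 0 ≤ β * (c + 2 * γ) := mul_nonneg hβ.1 (by linarith)
  have hupp : β * (c + 2 * γ) ≤ 3 * (3 * γ) := by gcongr <;> linarith [hβ.2]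
  constructor <;> linarith

theorem estimator_error_bound_general
    {n m d : ℕ}
    (γ R : ℝ)
    (a : Fin n → Fin m → Euc d)
    (φ'' : Fin n → Fin m → ℝ → ℝ)
    (hbdd : ∀ i j t, |φ'' i j t| ≤ γ)
    (hRub : ∀ i j, ‖a i j‖ ≤ R)
    (x : Euc d) (c : Fin n → Fin m → ℝ) (hcγ : ∀ i j, |c i j| ≤ γ)
    (β : ℝ)
    (hβmem : ∃ i j, β = (φ'' i j (rinner (a i j) x) + 2 * γ) / (c i j + 2 * γ)) :
    ‖Matrix.toEuclideanCLM (𝕜 := ℝ)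
        (Hmat a (fun i j => β * (c i j + 2 * γ) - 2 * γ) -
         Hmat a (fun i j => φ'' i j (rinner (a i j) x)))‖ ≤ 18 * γ * R ^ 2 := by
  obtain ⟨i₀, j₀, rfl⟩ := hβmem
  have hγ : 0 ≤ γ := (abs_nonneg _).trans (hcγ i₀ j₀)
  have hβ := shifted_ratio_mem_Icc (hbdd i₀ j₀ (rinner (a i₀ j₀) x)) (hcγ i₀ j₀)
  rw [Hmat_sub]
  calc _ ≤ 8 * γ * R ^ 2 := norm_toEuclideanCLM_Hmat_le (by positivity)
          (fun i j => abs_estimator_coeff_le hβ (hbdd i j _) (hcγ i j)) hRub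
    _ ≤ 18 * γ * R ^ 2 := by gcongr; norm_num

/-- operator-norm bound on the Hessian estimator error. -/
theorem estimator_error_bound
    {n m d : ℕ} (hn : 0 < n) (hm : 0 < m) (hd : 0 < d)
    (γ R : ℝ) (hγ : 0 < γ) (hR : 0 ≤ R)
    (a : Fin n → Fin m → Euc d) (φ : Fin n → Fin m → ℝ → ℝ)
    (φ'' : Fin n → Fin m → ℝ → ℝ) (hφ'' : ∀ i j, φ'' i j = deriv (deriv (φ i j)))
    (hsmooth : ∀ i j, ContDiff ℝ 2 (φ i j))
    (hbdd : ∀ i j t, |φ'' i j t| ≤ γ)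
    (hRub : ∀ i j, ‖a i j‖ ≤ R)
    (x : Euc d) (c : Fin n → Fin m → ℝ) (hcγ : ∀ i j, |c i j| ≤ γ)
    (β : ℝ)
    (hβub : ∀ i j, (φ'' i j (rinner (a i j) x) + 2 * γ) / (c i j + 2 * γ) ≤ β)
    (hβmem : ∃ i j, β = (φ'' i j (rinner (a i j) x) + 2 * γ) / (c i j + 2 * γ)) :
    ‖Matrix.toEuclideanCLM (𝕜 := ℝ)
        (Hmat a (fun i j => β * (c i j + 2 * γ) - 2 * γ) -
         Hmat a (fun i j => φ'' i j (rinner (a i j) x)))‖ ≤ 18 * γ * R ^ 2 :=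
  estimator_error_bound_general γ R a φ'' hbdd hRub x c hcγ β hβmem
end
end

section
/- (One step of CUBIC-NEWTON-LEARN.) Fix x ∈ ℝ^d and reals h_{ij} with |h_{ij}| ≤ γ for all i ∈ [n], j ∈ [m]. Set M = νR³, β = max_{i,j} (h_{ij}(x) + 2γ)/(h_{ij} + 2γ), H = (1/(nm)) Σ_{i,j} [ β (h_{ij} + 2γ) − 2γ ] a_{ij} a_{ij}ᵀ, and T(x, s) = ⟨∇P(x), s⟩ + (1/2)⟨(H + λI)s, s⟩ + (M/6)‖s‖³. Let s* be a global minimizer of s ↦ T(x, s) and x⁺ = x + s*. Then for every y ∈ ℝ^d: P(x⁺) ≤ P(y) + 9γR² ‖y − x‖² + (M/3) ‖y − x‖³. -/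
open MeasureTheory Filter
open scoped BigOperators

noncomputable section

/-- The cubically regularized model `T(x,s)` built from the Hessian estimator `Hmat a c + λ I`,
gradient `gP` and cubic coefficient `Mc`. -/
def cubicModel {n m d : ℕ} (a : Fin n → Fin m → Euc d) (gP : Euc d)
    (c : Fin n → Fin m → ℝ) (lam Mc : ℝ) (s : Euc d) : ℝ :=
  rinner gP s +
    1 / 2 * rinner (mulVecE (Hmat a c + lam • (1 : Matrix (Fin d) (Fin d) ℝ)) s) s +
    Mc / 6 * ‖s‖ ^ 3

/-!
Since the `φ''ᵢⱼ` are `ν`-Lipschitz, `P` agrees with its second-order Taylor model at `x` up to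
`(M/6)‖s‖³`. The choice of `β` places every weight `β (hᵢⱼ + 2γ) - 2γ` of `H` between
`φ''ᵢⱼ(⟨aᵢⱼ, x⟩)` and `φ''ᵢⱼ(⟨aᵢⱼ, x⟩) + 8γ` (because `β ≤ 3`), so `∇²P(x) ⪯ H + λI ⪯ ∇²P(x) + 8γR² I`.
Hence `P(x⁺)` is at most `P(x) + T(x, s*) ≤ P(x) + T(x, y - x)`, and the latter exceeds `P(y)` by at
most `4γR²‖y - x‖² + (M/3)‖y - x‖³`.
-/

lemma abs_le_of_hasDerivAt_of_abs_le_pow_of_nonneg {F G : ℝ → ℝ}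
    (hF : ∀ σ, HasDerivAt F (G σ) σ) (hF0 : F 0 = 0) {C : ℝ} {k : ℕ}
    (hG : ∀ σ, |G σ| ≤ C * |σ| ^ k) {u : ℝ} (hu : 0 ≤ u) :
    |F u| ≤ C * u ^ (k + 1) / (k + 1) := by
  have hB : ∀ σ, HasDerivAt (fun σ => C * σ ^ (k + 1) / (k + 1)) (C * σ ^ k) σ := by
    intro σ
    refine (((hasDerivAt_pow (k + 1) σ).const_mul C).div_const ((k : ℝ) + 1)).congr_deriv ?_
    rw [Nat.add_sub_cancel]
    push_cast
    field_simp
  refine image_norm_le_of_norm_deriv_right_le_deriv_boundary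
    (fun σ _ => (hF σ).continuousAt.continuousWithinAt) (fun σ _ => (hF σ).hasDerivWithinAt)
    (by simp [hF0]) hB (fun σ hσ => ?_) ⟨hu, le_rfl⟩
  simpa [Real.norm_eq_abs, abs_of_nonneg hσ.1] using hG σ

lemma abs_le_of_hasDerivAt_of_abs_le_pow {F G : ℝ → ℝ}
    (hF : ∀ σ, HasDerivAt F (G σ) σ) (hF0 : F 0 = 0) {C : ℝ} {k : ℕ}
    (hG : ∀ σ, |G σ| ≤ C * |σ| ^ k) (u : ℝ) :
    |F u| ≤ C * |u| ^ (k + 1) / (k + 1) := by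
  rcases le_total 0 u with hu | hu
  · rw [abs_of_nonneg hu]
    exact abs_le_of_hasDerivAt_of_abs_le_pow_of_nonneg hF hF0 hG hu
  · have hFneg : ∀ σ, HasDerivAt (fun σ => F (-σ)) (-G (-σ)) σ := fun σ => by
      simpa [Function.comp_def] using (hF (-σ)).comp σ (hasDerivAt_neg σ)
    rw [abs_of_nonpos hu]
    simpa using abs_le_of_hasDerivAt_of_abs_le_pow_of_nonneg hFneg (by simpa using hF0)
      (fun σ => by simpa using hG (-σ)) (neg_nonneg.mpr hu)

lemma abs_taylor_two_le {φ φ' φ'' : ℝ → ℝ} {ν : ℝ}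
    (hφ : ∀ t, HasDerivAt φ (φ' t) t) (hφ' : ∀ t, HasDerivAt φ' (φ'' t) t)
    (hlip : ∀ s t, |φ'' s - φ'' t| ≤ ν * |s - t|) (t u : ℝ) :
    |φ (t + u) - φ t - φ' t * u - φ'' t * u ^ 2 / 2| ≤ ν / 6 * |u| ^ 3 := by
  have hshift : ∀ {f f' : ℝ → ℝ}, (∀ t, HasDerivAt f (f' t) t) →
      ∀ σ, HasDerivAt (fun σ => f (t + σ)) (f' (t + σ)) σ := fun hf σ =>
    (hf (t + σ)).comp_const_add t σ
  have hφ't : ∀ σ, HasDerivAt (fun σ => φ' (t + σ) - φ' t - φ'' t * σ) (φ'' (t + σ) - φ'' t) σ :=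
    fun σ => by
      simpa using ((hshift hφ' σ).sub_const (φ' t)).fun_sub ((hasDerivAt_id σ).const_mul (φ'' t))
  have hφt : ∀ σ, HasDerivAt (fun σ => φ (t + σ) - φ t - φ' t * σ - φ'' t * σ ^ 2 / 2)
      (φ' (t + σ) - φ' t - φ'' t * σ) σ := fun σ => by
    refine ((((hshift hφ σ).sub_const (φ t)).fun_sub
      ((hasDerivAt_id' σ).const_mul (φ' t))).fun_sub
      (((hasDerivAt_pow 2 σ).const_mul (φ'' t)).div_const 2)).congr_deriv ?_
    simp only [mul_one, Nat.cast_ofNat, Nat.add_one_sub_one, pow_one]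
    ring
  have hφ'bound : ∀ σ, |φ' (t + σ) - φ' t - φ'' t * σ| ≤ ν / 2 * |σ| ^ 2 := fun σ => by
    have := abs_le_of_hasDerivAt_of_abs_le_pow (k := 1) hφ't (by simp)
        (fun σ => by simpa using hlip (t + σ) t) σ
    convert this using 1; ring
  convert abs_le_of_hasDerivAt_of_abs_le_pow (k := 2) hφt (by simp) hφ'bound u using 1
  ring

section Averages

variable {n m : ℕ}

lemma inv_mul_sum_sum_le (hn : 0 < n) (hm : 0 < m) {f : Fin n → Fin m → ℝ} {B : ℝ}
    (hf : ∀ i j, f i j ≤ B) : ((n : ℝ) * m)⁻¹ * ∑ i, ∑ j, f i j ≤ B := by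
  have hnm : (0 : ℝ) < n * m := by positivity
  have hsum : ∑ i, ∑ j, f i j ≤ n * m * B := by
    calc ∑ i, ∑ j, f i j ≤ ∑ _i : Fin n, ∑ _j : Fin m, B := by gcongr with i _ j _; exact hf i j
      _ = n * m * B := by simp [mul_assoc]
  rw [inv_mul_le_iff₀ hnm]
  exact hsum

lemma abs_inv_mul_sum_sum_le (hn : 0 < n) (hm : 0 < m) {f : Fin n → Fin m → ℝ} {B : ℝ}
    (hf : ∀ i j, |f i j| ≤ B) : |((n : ℝ) * m)⁻¹ * ∑ i, ∑ j, f i j| ≤ B := by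
  refine abs_le.mpr ⟨?_, inv_mul_sum_sum_le hn hm fun i j => (abs_le.mp (hf i j)).2⟩
  have := inv_mul_sum_sum_le hn hm (f := fun i j => -f i j) fun i j => neg_le.mp (abs_le.mp (hf i j)).1
  simp only [Finset.sum_neg_distrib, mul_neg] at this
  linarith

end Averages

lemma abs_rinner_le {d : ℕ} {a : Euc d} {R : ℝ} (ha : ‖a‖ ≤ R) (s : Euc d) :
    |rinner a s| ≤ R * ‖s‖ :=
  (abs_real_inner_le_norm a s).trans (mul_le_mul_of_nonneg_right ha (norm_nonneg s))

lemma sq_rinner_le {d : ℕ} {a : Euc d} {R : ℝ} (ha : ‖a‖ ≤ R) (s : Euc d) :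
    rinner a s ^ 2 ≤ R ^ 2 * ‖s‖ ^ 2 := by
  rw [← mul_pow, ← sq_abs]
  exact pow_le_pow_left₀ (abs_nonneg _) (abs_rinner_le ha s) 2

section HessianModel

variable {n m d : ℕ} (a : Fin n → Fin m → Euc d)

def hmatQuad (w : Fin n → Fin m → ℝ) (s : Euc d) : ℝ :=
  ((n : ℝ) * m)⁻¹ * ∑ i, ∑ j, w i j * rinner (a i j) s ^ 2

lemma rinner_mulVecE_Hmat_add_smul_one (w : Fin n → Fin m → ℝ) (lam : ℝ) (s : Euc d) :
    rinner (mulVecE (Hmat a w + lam • (1 : Matrix (Fin d) (Fin d) ℝ)) s) s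
      = hmatQuad a w s + lam * ‖s‖ ^ 2 := by
  have hdot : ∀ u v : Euc d, rinner u v = v.ofLp ⬝ᵥ u.ofLp := fun u v => by
    simp [rinner, EuclideanSpace.inner_eq_star_dotProduct]
  rw [hdot, ← real_inner_self_eq_norm_sq, real_inner_comm, ← rinner, hdot]
  have houter : ∀ v : Euc d, outerMat v = Matrix.vecMulVec v.ofLp v.ofLp := fun v => rfl
  simp only [mulVecE, hmatQuad, Hmat, houter, Matrix.add_mulVec, Matrix.smul_mulVec,
    Matrix.sum_mulVec, Matrix.vecMulVec_mulVec, Matrix.one_mulVec, hdot]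
  simp [dotProduct_sum, Finset.mul_sum, dotProduct_comm, sq, mul_assoc, mul_left_comm]

lemma cubicModel_eq (g : Euc d) (w : Fin n → Fin m → ℝ) (lam Mc : ℝ) (s : Euc d) :
    cubicModel a g w lam Mc s
      = rinner g s + (hmatQuad a w s + lam * ‖s‖ ^ 2) / 2 + Mc / 6 * ‖s‖ ^ 3 := by
  rw [cubicModel, rinner_mulVecE_Hmat_add_smul_one]
  ring

lemma hmatQuad_mono {w w' : Fin n → Fin m → ℝ} (h : ∀ i j, w i j ≤ w' i j) (s : Euc d) :
    hmatQuad a w s ≤ hmatQuad a w' s := by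
  unfold hmatQuad
  gcongr with i _ j _
  exact h i j

lemma hmatQuad_le_add (hn : 0 < n) (hm : 0 < m) {R B : ℝ} (hR : ∀ i j, ‖a i j‖ ≤ R) (hB : 0 ≤ B)
    {w w' : Fin n → Fin m → ℝ} (h : ∀ i j, w' i j ≤ w i j + B) (s : Euc d) :
    hmatQuad a w' s ≤ hmatQuad a w s + B * R ^ 2 * ‖s‖ ^ 2 := by
  have hdiff : hmatQuad a w' s - hmatQuad a w s
      = ((n : ℝ) * m)⁻¹ * ∑ i, ∑ j, (w' i j - w i j) * rinner (a i j) s ^ 2 := by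
    simp only [hmatQuad, sub_mul, Finset.sum_sub_distrib, mul_sub]
  have hbound : ((n : ℝ) * m)⁻¹ * ∑ i, ∑ j, (w' i j - w i j) * rinner (a i j) s ^ 2
      ≤ B * R ^ 2 * ‖s‖ ^ 2 := inv_mul_sum_sum_le hn hm fun i j =>
    calc (w' i j - w i j) * rinner (a i j) s ^ 2 ≤ B * rinner (a i j) s ^ 2 :=
          mul_le_mul_of_nonneg_right (by linarith [h i j]) (sq_nonneg _)
      _ ≤ B * (R ^ 2 * ‖s‖ ^ 2) := mul_le_mul_of_nonneg_left (sq_rinner_le (hR i j) s) hB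
      _ = B * R ^ 2 * ‖s‖ ^ 2 := by ring
  linarith

end HessianModel

section Objective

variable {n m d : ℕ} {a : Fin n → Fin m → Euc d} {φ : Fin n → Fin m → ℝ → ℝ} {lam : ℝ}
  {P : Euc d → ℝ}

lemma rinner_gradient_eq (hφ : ∀ i j, Differentiable ℝ (φ i j))
    (hP : ∀ y, P y = ((n : ℝ) * m)⁻¹ * (∑ i, ∑ j, φ i j (rinner (a i j) y)) + lam / 2 * ‖y‖ ^ 2)
    (x s : Euc d) :
    rinner (gradient P x) s = ((n : ℝ) * m)⁻¹ *
      (∑ i, ∑ j, deriv (φ i j) (rinner (a i j) x) * rinner (a i j) s) + lam * rinner x s := by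
  have hterm : ∀ i j, HasFDerivAt (fun y => φ i j (rinner (a i j) y))
      (deriv (φ i j) (rinner (a i j) x) • innerSL ℝ (a i j)) x := fun i j =>
    ((hφ i j _).hasDerivAt).comp_hasFDerivAt x (innerSL ℝ (a i j)).hasFDerivAt
  have hsum : HasFDerivAt (fun y => ∑ i, ∑ j, φ i j (rinner (a i j) y))
      (∑ i, ∑ j, deriv (φ i j) (rinner (a i j) x) • innerSL ℝ (a i j)) x :=
    HasFDerivAt.fun_sum fun i _ => HasFDerivAt.fun_sum fun j _ => hterm i j
  have hPderiv := (hsum.const_mul ((n : ℝ) * m)⁻¹).fun_add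
    ((hasStrictFDerivAt_norm_sq x).hasFDerivAt.const_mul (lam / 2))
  rw [← funext hP] at hPderiv
  rw [rinner, inner_gradient_left, hPderiv.fderiv]
  simp only [rinner, real_inner_comm, add_apply, smul_apply, sum_apply, coe_innerSL_apply,
    smul_eq_mul, nsmul_eq_mul, Nat.cast_ofNat]
  ring

lemma abs_taylor_two_objective_le (hn : 0 < n) (hm : 0 < m) {ν R : ℝ} (hν : 0 ≤ ν)
    (hsmooth : ∀ i j, ContDiff ℝ 2 (φ i j))
    (hlip : ∀ i j s t, |deriv (deriv (φ i j)) s - deriv (deriv (φ i j)) t| ≤ ν * |s - t|)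
    (hR : ∀ i j, ‖a i j‖ ≤ R)
    (hP : ∀ y, P y = ((n : ℝ) * m)⁻¹ * (∑ i, ∑ j, φ i j (rinner (a i j) y)) + lam / 2 * ‖y‖ ^ 2)
    (x s : Euc d) :
    |P (x + s) - P x - rinner (gradient P x) s -
        (hmatQuad a (fun i j => deriv (deriv (φ i j)) (rinner (a i j) x)) s + lam * ‖s‖ ^ 2) / 2|
      ≤ ν * R ^ 3 / 6 * ‖s‖ ^ 3 := by
  have hφ : ∀ i j, Differentiable ℝ (φ i j) := fun i j => (hsmooth i j).differentiable (by simp)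
  have hexpand : P (x + s) - P x - rinner (gradient P x) s -
      (hmatQuad a (fun i j => deriv (deriv (φ i j)) (rinner (a i j) x)) s + lam * ‖s‖ ^ 2) / 2
      = ((n : ℝ) * m)⁻¹ * ∑ i, ∑ j, (φ i j (rinner (a i j) x + rinner (a i j) s)
          - φ i j (rinner (a i j) x) - deriv (φ i j) (rinner (a i j) x) * rinner (a i j) s
          - deriv (deriv (φ i j)) (rinner (a i j) x) * rinner (a i j) s ^ 2 / 2) := by
    have hnorm : ‖x + s‖ ^ 2 = ‖x‖ ^ 2 + 2 * rinner x s + ‖s‖ ^ 2 := norm_add_sq_real x s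
    rw [rinner_gradient_eq hφ hP, hP, hP, hnorm]
    simp only [hmatQuad, rinner, inner_add_right, Finset.sum_sub_distrib, ← Finset.sum_div]
    ring
  rw [hexpand]
  refine abs_inv_mul_sum_sum_le hn hm fun i j => ?_
  refine (abs_taylor_two_le (fun t => (hφ i j t).hasDerivAt)
    (fun t => ((hsmooth i j).differentiable_deriv_two t).hasDerivAt) (hlip i j) _ _).trans ?_
  calc ν / 6 * |rinner (a i j) s| ^ 3 ≤ ν / 6 * (R * ‖s‖) ^ 3 := by
        gcongr; exact abs_rinner_le (hR i j) s
    _ = ν * R ^ 3 / 6 * ‖s‖ ^ 3 := by ring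

end Objective

section Rescaling

variable {γ h c β : ℝ}

lemma le_rescaled_of_div_le (hc : |c| ≤ γ) (hγ : 0 < γ)
    (hβ : (h + 2 * γ) / (c + 2 * γ) ≤ β) : h ≤ β * (c + 2 * γ) - 2 * γ := by
  have hpos : 0 < c + 2 * γ := by linarith [neg_abs_le c]
  linarith [(div_le_iff₀ hpos).mp hβ]

lemma div_le_three (hh : |h| ≤ γ) (hc : |c| ≤ γ) (hγ : 0 < γ) :
    (h + 2 * γ) / (c + 2 * γ) ≤ 3 := by
  have hpos : 0 < c + 2 * γ := by linarith [neg_abs_le c]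
  rw [div_le_iff₀ hpos]
  linarith [le_abs_self h, neg_abs_le c]

lemma rescaled_le_add (hh : |h| ≤ γ) (hc : |c| ≤ γ) (hβ : β ≤ 3) :
    β * (c + 2 * γ) - 2 * γ ≤ h + 8 * γ := by
  have := mul_le_mul_of_nonneg_right hβ (by linarith [neg_abs_le c, abs_nonneg c] : 0 ≤ c + 2 * γ)
  linarith [neg_abs_le h, le_abs_self c]

end Rescaling

lemma cubic_step_le {E : Type*} [Add E] [Norm E] {P ℓ Q Q' : E → ℝ} {x s₀ v : E} {M D : ℝ}
    (htaylor : ∀ s, |P (x + s) - P x - ℓ s - Q s / 2| ≤ M / 6 * ‖s‖ ^ 3)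
    (hQ : Q s₀ ≤ Q' s₀) (hQ' : Q' v ≤ Q v + D * ‖v‖ ^ 2)
    (hmin : ℓ s₀ + Q' s₀ / 2 + M / 6 * ‖s₀‖ ^ 3 ≤ ℓ v + Q' v / 2 + M / 6 * ‖v‖ ^ 3) :
    P (x + s₀) ≤ P (x + v) + D / 2 * ‖v‖ ^ 2 + M / 3 * ‖v‖ ^ 3 := by
  have h₀ := (abs_le.mp (htaylor s₀)).2
  have hv := (abs_le.mp (htaylor v)).1
  linarith

theorem cnl_one_step_progress_general
    {n m d : ℕ} (hn : 0 < n) (hm : 0 < m)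
    (ν γ lam R : ℝ) (hν : 0 ≤ ν) (hγ : 0 < γ)
    (a : Fin n → Fin m → Euc d) (φ : Fin n → Fin m → ℝ → ℝ)
    (φ'' : Fin n → Fin m → ℝ → ℝ) (hφ'' : ∀ i j, φ'' i j = deriv (deriv (φ i j)))
    (hsmooth : ∀ i j, ContDiff ℝ 2 (φ i j))
    (hbdd : ∀ i j t, |φ'' i j t| ≤ γ)
    (hlip : ∀ i j s t, |φ'' i j s - φ'' i j t| ≤ ν * |s - t|)
    (hRub : ∀ i j, ‖a i j‖ ≤ R)
    (P : Euc d → ℝ)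
    (hP : ∀ y, P y = ((n : ℝ) * m)⁻¹ * (∑ i, ∑ j, φ i j (rinner (a i j) y))
        + lam / 2 * ‖y‖ ^ 2)
    (x : Euc d) (c : Fin n → Fin m → ℝ) (hcγ : ∀ i j, |c i j| ≤ γ)
    (β : ℝ)
    (hβub : ∀ i j, (φ'' i j (rinner (a i j) x) + 2 * γ) / (c i j + 2 * γ) ≤ β)
    (hβmem : ∃ i j, β = (φ'' i j (rinner (a i j) x) + 2 * γ) / (c i j + 2 * γ))
    (sstar : Euc d)
    (hss : ∀ s : Euc d,
        cubicModel a (gradient P x) (fun i j => β * (c i j + 2 * γ) - 2 * γ)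
            lam (ν * R ^ 3) sstar ≤
          cubicModel a (gradient P x) (fun i j => β * (c i j + 2 * γ) - 2 * γ)
            lam (ν * R ^ 3) s)
    (xplus : Euc d) (hxplus : xplus = x + sstar) :
    ∀ y : Euc d, P xplus ≤ P y + 9 * γ * R ^ 2 * ‖y - x‖ ^ 2 +
      ν * R ^ 3 / 3 * ‖y - x‖ ^ 3 := by
  intro y
  subst hxplus
  obtain rfl : φ'' = fun i j => deriv (deriv (φ i j)) := funext fun i => funext (hφ'' i)
  obtain ⟨i₀, j₀, hβ⟩ := hβmem
  have hβ3 : β ≤ 3 := hβ ▸ div_le_three (hbdd i₀ j₀ _) (hcγ i₀ j₀) hγ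
  have hlow := hmatQuad_mono a fun i j => le_rescaled_of_div_le (hcγ i j) hγ (hβub i j)
  have hup := hmatQuad_le_add a hn hm hRub (by positivity : 0 ≤ 8 * γ)
    fun i j => rescaled_le_add (hbdd i j (rinner (a i j) x)) (hcγ i j) hβ3
  have hstep := cubic_step_le (x := x) (s₀ := sstar) (v := y - x) (D := 8 * γ * R ^ 2)
    (Q := fun s => hmatQuad a (fun i j => deriv (deriv (φ i j)) (rinner (a i j) x)) s
      + lam * ‖s‖ ^ 2)
    (Q' := fun s => hmatQuad a (fun i j => β * (c i j + 2 * γ) - 2 * γ) s + lam * ‖s‖ ^ 2)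
    (abs_taylor_two_objective_le hn hm hν hsmooth hlip hRub hP x)
    (by linarith [hlow sstar]) (by linarith [hup (y - x)])
    (by simpa only [cubicModel_eq] using hss (y - x))
  rw [add_sub_cancel] at hstep
  have : 0 ≤ γ * R ^ 2 * ‖y - x‖ ^ 2 := by positivity
  linarith

/-- progress of one step of CUBIC-NEWTON-LEARN (Lemma 3). -/
theorem cnl_one_step_progress
    {n m d : ℕ} (hn : 0 < n) (hm : 0 < m) (hd : 0 < d)
    (ν γ lam R : ℝ) (hν : 0 ≤ ν) (hγ : 0 < γ) (hlam : 0 ≤ lam) (hR : 0 ≤ R)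
    (a : Fin n → Fin m → Euc d) (φ : Fin n → Fin m → ℝ → ℝ)
    (φ'' : Fin n → Fin m → ℝ → ℝ) (hφ'' : ∀ i j, φ'' i j = deriv (deriv (φ i j)))
    (hsmooth : ∀ i j, ContDiff ℝ 2 (φ i j))
    (hbdd : ∀ i j t, |φ'' i j t| ≤ γ)
    (hlip : ∀ i j s t, |φ'' i j s - φ'' i j t| ≤ ν * |s - t|)
    (hRub : ∀ i j, ‖a i j‖ ≤ R)
    (P : Euc d → ℝ)
    (hP : ∀ y, P y = ((n : ℝ) * m)⁻¹ * (∑ i, ∑ j, φ i j (rinner (a i j) y))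
        + lam / 2 * ‖y‖ ^ 2)
    (x : Euc d) (c : Fin n → Fin m → ℝ) (hcγ : ∀ i j, |c i j| ≤ γ)
    (β : ℝ)
    (hβub : ∀ i j, (φ'' i j (rinner (a i j) x) + 2 * γ) / (c i j + 2 * γ) ≤ β)
    (hβmem : ∃ i j, β = (φ'' i j (rinner (a i j) x) + 2 * γ) / (c i j + 2 * γ))
    (sstar : Euc d)
    (hss : ∀ s : Euc d,
        cubicModel a (gradient P x) (fun i j => β * (c i j + 2 * γ) - 2 * γ)
            lam (ν * R ^ 3) sstar ≤
          cubicModel a (gradient P x) (fun i j => β * (c i j + 2 * γ) - 2 * γ)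
            lam (ν * R ^ 3) s)
    (xplus : Euc d) (hxplus : xplus = x + sstar) :
    ∀ y : Euc d, P xplus ≤ P y + 9 * γ * R ^ 2 * ‖y - x‖ ^ 2 +
      ν * R ^ 3 / 3 * ‖y - x‖ ^ 3 :=
  cnl_one_step_progress_general hn hm ν γ lam R hν hγ a φ φ'' hφ'' hsmooth hbdd hlip hRub P hP x c
    hcγ β hβub hβmem sstar hss xplus hxplus
end
end
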